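/- arXiv:2110.09152 — 2 statements merged into one kernel-verified Lean document; each statement's English description precedes it below -/
import Mathlib

section
/- Consider a lifted DecPOMDP with a finite state space S with |S| = s and K partitions of agents, where partition k has n_k agents with n_k ≤ n and a nonempty finite local action set A_k with |A_k| ≤ a. Then the domain of the lifted transition model — the product S × S × ∏_{k=1}^K Sym(A_k, n_k), where Sym(A_k, n_k) is the set of multisets of size n_k over A_k — has cardinality at most s · s · ((n + 1)^a)^K, which is polynomial in n for fixed a and K. -/
lemma sym_card_le (α : Type*) [Fintype α] [DecidableEq α] (m : ℕ) :
    Fintype.card (Sym α m) ≤ (m + 1) ^ Fintype.card α := by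
  have hinj : Function.Injective
      (fun (x : Sym α m) (i : α) => (⟨Multiset.count i x.1, by
        have := x.2
        have h := Multiset.count_le_card i x.1
        omega⟩ : Fin (m + 1))) := by
    intro x y hxy
    apply Subtype.ext
    ext i
    have := congrFun hxy i
    simpa [Fin.ext_iff] using this
  calc Fintype.card (Sym α m) ≤ Fintype.card (α → Fin (m + 1)) :=
        Fintype.card_le_of_injective _ hinj
    _ = (m + 1) ^ Fintype.card α := by simp

/-- For a lifted DecPOMDP with `|S| = s` and `K` partitions, partition `k` having
`nk k ≤ n` agents and nonempty finite local action set `A k` with `|A k| ≤ a`, the domain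
of the lifted transition model `S × S × ∏ k, Sym (A k) (nk k)` has cardinality at most
`s * s * ((n + 1) ^ a) ^ K`, polynomial in `n` for fixed `a` and `K`. -/
theorem lifted_transition_domain_card_le (K : ℕ) (S : Type*) [Fintype S] (s : ℕ)
    (hs : Fintype.card S = s) (nk : Fin K → ℕ) (n : ℕ) (hn : ∀ k, nk k ≤ n)
    (A : Fin K → Type*) [∀ k, Fintype (A k)] [∀ k, DecidableEq (A k)]
    [∀ k, Nonempty (A k)] (a : ℕ) (ha : ∀ k, Fintype.card (A k) ≤ a) :
    Fintype.card (S × S × (∀ k, Sym (A k) (nk k))) ≤ s * s * ((n + 1) ^ a) ^ K := by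
  have hk : ∀ k, Fintype.card (Sym (A k) (nk k)) ≤ (n + 1) ^ a := by
    intro k
    calc Fintype.card (Sym (A k) (nk k)) ≤ (nk k + 1) ^ Fintype.card (A k) :=
          sym_card_le _ _
      _ ≤ (n + 1) ^ Fintype.card (A k) := Nat.pow_le_pow_left (by have := hn k; omega) _
      _ ≤ (n + 1) ^ a := Nat.pow_le_pow_right (by omega) (ha k)
  have hpi : Fintype.card (∀ k, Sym (A k) (nk k)) ≤ ((n + 1) ^ a) ^ K := by
    rw [Fintype.card_pi]
    calc ∏ k, Fintype.card (Sym (A k) (nk k)) ≤ ∏ _k : Fin K, (n + 1) ^ a :=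
          Finset.prod_le_prod (fun _ _ => Nat.zero_le _) (fun k _ => hk k)
      _ = ((n + 1) ^ a) ^ K := by simp
  simp only [Fintype.card_prod, hs]
  rw [mul_assoc]
  exact Nat.mul_le_mul_left s (Nat.mul_le_mul_left s hpi)
end

section
/- Consider a lifted DecPOMDP with a finite state space S with |S| = s and K partitions of agents, where partition k has n_k agents with n_k ≤ n and a nonempty finite local observation set O_k with |O_k| ≤ o. Then the domain of the lifted sensor model — the product (∏_{k=1}^K Sym(O_k, n_k)) × S, where Sym(O_k, n_k) is the set of multisets of size n_k over O_k — has cardinality at most s · ((n + 1)^o)^K, which is polynomial in n for fixed o and K. -/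
/-- For a lifted DecPOMDP with `|S| = s` and `K` partitions, partition `k` having
`nk k ≤ n` agents and nonempty finite local observation set `O k` with `|O k| ≤ o`, the
domain of the lifted sensor model `(∏ k, Sym (O k) (nk k)) × S` has cardinality at most
`s * ((n + 1) ^ o) ^ K`, polynomial in `n` for fixed `o` and `K`. -/
theorem lifted_sensor_domain_card_le (K : ℕ) (S : Type*) [Fintype S] (s : ℕ)
    (hs : Fintype.card S = s) (nk : Fin K → ℕ) (n : ℕ) (hn : ∀ k, nk k ≤ n)
    (O : Fin K → Type*) [∀ k, Fintype (O k)] [∀ k, DecidableEq (O k)]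
    [∀ k, Nonempty (O k)] (o : ℕ) (ho : ∀ k, Fintype.card (O k) ≤ o) :
    Fintype.card ((∀ k, Sym (O k) (nk k)) × S) ≤ s * ((n + 1) ^ o) ^ K := by
  rw [Fintype.card_prod, Fintype.card_pi, hs, mul_comm]
  apply Nat.mul_le_mul_left
  calc ∏ k, Fintype.card (Sym (O k) (nk k))
      ≤ ∏ _k : Fin K, (n + 1) ^ o := by
        apply Finset.prod_le_prod (fun _ _ => Nat.zero_le _)
        intro k _
        calc Fintype.card (Sym (O k) (nk k)) ≤ (nk k + 1) ^ Fintype.card (O k) :=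
              sym_card_le _ _
          _ ≤ (n + 1) ^ o := Nat.pow_le_pow_left (Nat.succ_le_succ (hn k)) (Fintype.card (O k)) |>.trans
              (Nat.pow_le_pow_right (by omega) (ho k))
    _ = ((n + 1) ^ o) ^ K := by simp
end
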